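/- arXiv:2110.13678 — 7 statements merged into one kernel-verified Lean document; each statement's English description precedes it below -/
import Mathlib

section
/- Let ((S^a)_{a∈I}, 𝔽, 𝔾, T) be a standard platonic market with 𝒫_p ≠ ∅ for some p ∈ [1,∞). Let δ = (δ^A)_{A∈𝒜} be a family of information delays, each δ^A an information delay for 𝔽^A, and let 𝔽^δ = (𝔽^{A,δ})_{A∈𝒜} be the recursively defined δ-delayed filtrations. If ((S^a)_{a∈I}, 𝔽, 𝔾, T) satisfies the no asymptotic L^p-free lunch condition (NAFLp), then the delayed market ((S^a)_{a∈I}, 𝔽^δ, 𝔾, T) — i.e. the market in which 𝔽^A-simple bounded trading strategies are replaced by 𝔽^{A,δ}-simple bounded trading strategies — also satisfies the no asymptotic L^p-free lunch condition. -/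
open MeasureTheory Set Filter
open scoped ENNReal NNReal

noncomputable section

/-- The σ-field of the `τ`-past: generated by the sets `A` such that `A ∩ {τ ≤ s}` is
`F s`-measurable for every time `s` in the time domain `D` of the filtration `F`.
(When `τ` is a stopping time this family is itself a σ-algebra.) -/
def pastSigma {Ω ι : Type*} [Preorder ι] (F : ι → MeasurableSpace Ω) (D : Set ι)
    (τ : Ω → ι) : MeasurableSpace Ω :=
  MeasurableSpace.generateFrom {A | ∀ s ∈ D, MeasurableSet[F s] (A ∩ {ω | τ ω ≤ s})}

/-- An information delay for the filtration `F = (F t)_{t ∈ [0,T]}`: each `δ t` is an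
`F`-stopping time, `0 ≤ δ t ω ≤ t`, and `δ` is pathwise monotone. -/
def IsInformationDelay {Ω : Type*} (F : ℝ≥0∞ → MeasurableSpace Ω) (T : ℝ≥0∞)
    (δ : ℝ≥0∞ → Ω → ℝ≥0∞) : Prop :=
  (∀ t ≤ T, ∀ s ≤ T, MeasurableSet[F s] {ω | δ t ω ≤ s}) ∧
  (∀ t ≤ T, ∀ ω, δ t ω ≤ t) ∧
  (∀ t u : ℝ≥0∞, t ≤ u → u ≤ T → ∀ ω, δ t ω ≤ δ u ω)

/-- The recursively defined `δ`-delayed filtrations: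
`𝓕^{A,δ}_t = σ(𝓕^A_{δ^A(t)} ∪ ⋃ {𝓕^{A',δ}_t : A' ∈ 𝒜, A' ⊊ A})`. -/
def delayedFiltration {Ω I : Type*} (F : Finset I → ℝ≥0∞ → MeasurableSpace Ω)
    (T : ℝ≥0∞) (𝒜 : Set (Finset I)) (δ : Finset I → ℝ≥0∞ → Ω → ℝ≥0∞)
    (A : Finset I) (t : ℝ≥0∞) : MeasurableSpace Ω :=
  pastSigma (F A) (Set.Iic T) (δ A t) ⊔
    ⨆ (A' : Finset I) (_ : A' ∈ 𝒜) (_ : A' ⊂ A), delayedFiltration F T 𝒜 δ A' t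
termination_by A.card
decreasing_by exact Finset.card_lt_card ‹A' ⊂ A›

/-- `X` is the terminal wealth of an `𝔽^A`-simple bounded trading strategy on a market
fraction `A ∈ 𝒜`, with trading times `0 ≤ t 0 < … < t m ≤ T`:  `X ∈ K₀`. -/
def IsTerminalWealth {Ω I : Type*} (𝒜 : Set (Finset I))
    (F : Finset I → ℝ≥0∞ → MeasurableSpace Ω) (S : I → ℝ≥0∞ → Ω → ℝ) (T : ℝ≥0∞)
    (X : Ω → ℝ) : Prop :=
  ∃ A ∈ 𝒜, ∃ (m : ℕ) (t : ℕ → ℝ≥0∞) (H : I → ℕ → Ω → ℝ),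
    (∀ i, i < m → t i < t (i + 1)) ∧ (∀ i, i ≤ m → t i ≤ T) ∧
    (∀ a ∈ A, ∀ i, i < m → Measurable[F A (t i)] (H a i)) ∧
    (∃ Cb : ℝ, ∀ a ∈ A, ∀ i, i < m → ∀ ω, |H a i ω| ≤ Cb) ∧
    ∀ ω, X ω = ∑ a ∈ A, ∑ i ∈ Finset.range m, H a i ω * (S a (t (i + 1)) ω - S a (t i) ω)

/-- `X ∈ C = K₀ - L⁰₊(Ω, 𝒢, P)`. -/
def InC {Ω I : Type*} [MeasurableSpace Ω] (𝒜 : Set (Finset I))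
    (F : Finset I → ℝ≥0∞ → MeasurableSpace Ω) (S : I → ℝ≥0∞ → Ω → ℝ) (T : ℝ≥0∞)
    (X : Ω → ℝ) : Prop :=
  ∃ k h : Ω → ℝ, IsTerminalWealth 𝒜 F S T k ∧ Measurable h ∧ (∀ ω, 0 ≤ h ω) ∧
    ∀ ω, X ω = k ω - h ω

/-- `P' ∈ 𝒫_p`: `P'` is a probability measure equivalent to `P` with `K₀ ⊆ L^p(P')`. -/
def MemPp {Ω I : Type*} [MeasurableSpace Ω] (P P' : Measure Ω) (p : ℝ≥0∞)
    (𝒜 : Set (Finset I)) (F : Finset I → ℝ≥0∞ → MeasurableSpace Ω)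
    (S : I → ℝ≥0∞ → Ω → ℝ) (T : ℝ≥0∞) : Prop :=
  IsProbabilityMeasure P' ∧ P' ≪ P ∧ P ≪ P' ∧
    ∀ X : Ω → ℝ, IsTerminalWealth 𝒜 F S T X → MemLp X p P'

/-- The market satisfies the no asymptotic `L^p`-free lunch condition (NAFLp): for some
`P' ∈ 𝒫_p`, the `L^p(P')`-norm closure of `C_p(P') = C ∩ L^p(P')` meets the nonnegative
cone `L^p₊(P')` only in `0`. -/
def SatisfiesNAFLp {Ω I : Type*} [MeasurableSpace Ω] (P : Measure Ω) (p : ℝ≥0∞)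
    (𝒜 : Set (Finset I)) (F : Finset I → ℝ≥0∞ → MeasurableSpace Ω)
    (S : I → ℝ≥0∞ → Ω → ℝ) (T : ℝ≥0∞) : Prop :=
  ∃ P' : Measure Ω, MemPp P P' p 𝒜 F S T ∧
    ∀ X : Ω → ℝ, MemLp X p P' → (∀ᵐ ω ∂P', 0 ≤ X ω) →
      (∀ ε : ℝ≥0∞, 0 < ε → ∃ f : Ω → ℝ, InC 𝒜 F S T f ∧ MemLp f p P' ∧
        eLpNorm (f - X) p P' < ε) →
      ∀ᵐ ω ∂P', X ω = 0

/-!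
Delaying information only shrinks the trading σ-fields: since `δ^A(t) ≤ t`, the `δ^A(t)`-past
is contained in `𝓕^A_t`, and by induction on `|A|` and monotonicity of `𝔽^A` in `A` we get
`𝓕^{A,δ}_t ⊆ 𝓕^A_t`. Hence every delayed strategy is an undelayed one, and NAFLp, which only
gets harder to satisfy the more strategies there are, passes to the delayed market.
-/

theorem pastSigma_le {Ω ι : Type*} [Preorder ι] {F : ι → MeasurableSpace Ω} {D : Set ι}
    {τ : Ω → ι} {t : ι} (ht : t ∈ D) (hτ : ∀ ω, τ ω ≤ t) : pastSigma F D τ ≤ F t := by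
  refine MeasurableSpace.generateFrom_le fun B hB => ?_
  simpa [hτ] using hB t ht

theorem delayedFiltration_le_s0 {Ω I : Type*} {T : ℝ≥0∞} {𝒜 : Set (Finset I)}
    {F : Finset I → ℝ≥0∞ → MeasurableSpace Ω}
    (hFmono : ∀ A ∈ 𝒜, ∀ A' ∈ 𝒜, A ⊆ A' → ∀ t ≤ T, F A t ≤ F A' t)
    {δ : Finset I → ℝ≥0∞ → Ω → ℝ≥0∞} (hδ : ∀ A ∈ 𝒜, ∀ t ≤ T, ∀ ω, δ A t ω ≤ t)
    (A : Finset I) (hA : A ∈ 𝒜) (t : ℝ≥0∞) (ht : t ≤ T) :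
    delayedFiltration F T 𝒜 δ A t ≤ F A t := by
  induction A using Finset.strongInduction with
  | _ A ih =>
    rw [delayedFiltration]
    refine sup_le (pastSigma_le (Set.mem_Iic.2 ht) (hδ A hA t ht)) ?_
    refine iSup₂_le fun A' hA' => iSup_le fun hA'A => ?_
    exact (ih A' hA'A hA').trans (hFmono A' hA' A hA hA'A.subset t ht)

section FiltrationMono

variable {Ω I : Type*} {𝒜 : Set (Finset I)} {F F' : Finset I → ℝ≥0∞ → MeasurableSpace Ω}
  {S : I → ℝ≥0∞ → Ω → ℝ} {T : ℝ≥0∞}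

theorem IsTerminalWealth.mono (hF : ∀ A ∈ 𝒜, ∀ t ≤ T, F' A t ≤ F A t) {X : Ω → ℝ}
    (hX : IsTerminalWealth 𝒜 F' S T X) : IsTerminalWealth 𝒜 F S T X := by
  obtain ⟨A, hA, m, t, H, ht, htT, hH, hbdd, hX⟩ := hX
  exact ⟨A, hA, m, t, H, ht, htT,
    fun a ha i hi => (hH a ha i hi).mono (hF A hA (t i) (htT i hi.le)) le_rfl, hbdd, hX⟩

variable [MeasurableSpace Ω]

theorem InC.mono (hF : ∀ A ∈ 𝒜, ∀ t ≤ T, F' A t ≤ F A t) {X : Ω → ℝ}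
    (hX : InC 𝒜 F' S T X) : InC 𝒜 F S T X := by
  obtain ⟨k, h, hk, hh⟩ := hX
  exact ⟨k, h, hk.mono hF, hh⟩

theorem MemPp.antitone (hF : ∀ A ∈ 𝒜, ∀ t ≤ T, F' A t ≤ F A t) {P P' : Measure Ω} {p : ℝ≥0∞}
    (hP' : MemPp P P' p 𝒜 F S T) : MemPp P P' p 𝒜 F' S T :=
  ⟨hP'.1, hP'.2.1, hP'.2.2.1, fun X hX => hP'.2.2.2 X (hX.mono hF)⟩

theorem SatisfiesNAFLp.antitone (hF : ∀ A ∈ 𝒜, ∀ t ≤ T, F' A t ≤ F A t) {P : Measure Ω}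
    {p : ℝ≥0∞} (h : SatisfiesNAFLp P p 𝒜 F S T) : SatisfiesNAFLp P p 𝒜 F' S T := by
  obtain ⟨P', hP', hNA⟩ := h
  refine ⟨P', hP'.antitone hF, fun X hXp hX0 happrox => hNA X hXp hX0 fun ε hε => ?_⟩
  obtain ⟨f, hfC, hf⟩ := happrox ε hε
  exact ⟨f, hfC.mono hF, hf⟩

end FiltrationMono

theorem NAFLp_informationDelay_general
    {Ω I : Type*} [m𝒢 : MeasurableSpace Ω]
    (P : Measure Ω)
    (T : ℝ≥0∞)
    (𝒜 : Set (Finset I))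
    (F : Finset I → ℝ≥0∞ → MeasurableSpace Ω)
    (hFmono : ∀ A ∈ 𝒜, ∀ A' ∈ 𝒜, A ⊆ A' → ∀ t ≤ T, F A t ≤ F A' t)
    (S : I → ℝ≥0∞ → Ω → ℝ)
    (p : ℝ≥0∞)
    (δ : Finset I → ℝ≥0∞ → Ω → ℝ≥0∞)
    (hδ : ∀ A ∈ 𝒜, IsInformationDelay (F A) T (δ A))
    (hNAFL : SatisfiesNAFLp P p 𝒜 F S T) :
    SatisfiesNAFLp P p 𝒜 (delayedFiltration F T 𝒜 δ) S T :=
  hNAFL.antitone (delayedFiltration_le_s0 hFmono fun A hA => (hδ A hA).2.1)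

/-- **NAFLp with information delay.** If a standard platonic market
`((S^a)_{a∈I}, 𝔽, 𝔾, T)` with `𝒫_p ≠ ∅` satisfies the no asymptotic `L^p`-free lunch
condition, then so does the market `((S^a)_{a∈I}, 𝔽^δ, 𝔾, T)` in which the trading
filtrations are replaced by the recursively defined `δ`-delayed filtrations for a family
`δ = (δ^A)_{A∈𝒜}` of information delays. -/
theorem NAFLp_informationDelay
    {Ω I : Type*} [DecidableEq I] [m𝒢 : MeasurableSpace Ω]
    (P : Measure Ω) [IsProbabilityMeasure P]
    (T : ℝ≥0∞) (hT : 0 < T)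
    (G : ℝ≥0∞ → MeasurableSpace Ω)
    (hGmono : ∀ s t : ℝ≥0∞, s ≤ t → t ≤ T → G s ≤ G t)
    (hGT : G T = m𝒢)
    (𝒜 : Set (Finset I)) (h𝒜 : ∀ A₁ ∈ 𝒜, ∀ A₂ ∈ 𝒜, A₁ ∪ A₂ ∈ 𝒜)
    (F : Finset I → ℝ≥0∞ → MeasurableSpace Ω)
    (hFfilt : ∀ A ∈ 𝒜, ∀ s t : ℝ≥0∞, s ≤ t → t ≤ T → F A s ≤ F A t)
    (hFG : ∀ A ∈ 𝒜, ∀ t ≤ T, F A t ≤ G t)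
    (hFmono : ∀ A ∈ 𝒜, ∀ A' ∈ 𝒜, A ⊆ A' → ∀ t ≤ T, F A t ≤ F A' t)
    (S : I → ℝ≥0∞ → Ω → ℝ)
    (hSadapted : ∀ a, ∀ t ≤ T, Measurable[G t] (S a t))
    (p : ℝ≥0∞) (hp : 1 ≤ p) (hp' : p ≠ ⊤)
    (hPp : ∃ P' : Measure Ω, MemPp P P' p 𝒜 F S T)
    (δ : Finset I → ℝ≥0∞ → Ω → ℝ≥0∞)
    (hδ : ∀ A ∈ 𝒜, IsInformationDelay (F A) T (δ A))
    (hNAFL : SatisfiesNAFLp P p 𝒜 F S T) :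
    SatisfiesNAFLp P p 𝒜 (delayedFiltration F T 𝒜 δ) S T :=
  NAFLp_informationDelay_general (m𝒢 := m𝒢) P T 𝒜 F hFmono S p δ hδ hNAFL
end
end

section
/- Let 𝔽 = (𝓕_t)_{t∈ℝ₊} be a right-continuous filtration (𝓕_t = ⋂_{u>t} 𝓕_u) of sub-σ-algebras of 𝒢 on a probability space (Ω, 𝒢, P), and let T ∈ (0,∞). Let π = (π(s))_{s∈[0,T]} be an order execution delay for 𝔽 that is pathwise continuous and satisfies π(0,ω) = 0 for all ω ∈ Ω. Define the time-changed filtration 𝓕̃_s := 𝓕_{π(s)} (the σ-field of the π(s)-past), s ∈ [0,T], and δ(t,ω) := min( inf{s ∈ [0,T] : π(s,ω) ≥ t}, T ) for t ∈ [0,T]. Then: (i) δ is an information delay for 𝔽̃ = (𝓕̃_s)_{s∈[0,T]}, i.e. each δ(t) is an 𝔽̃-stopping time, 0 ≤ δ(t,ω) ≤ t, and δ(t,ω) ≤ δ(u,ω) for t ≤ u; and (ii) the δ-delayed filtration of 𝔽̃ recovers 𝔽: for every t ∈ [0,T], the σ-field of the δ(t)-past with respect to 𝔽̃ equals 𝓕_t.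 -/
/-!
Writing `δ(t)` for the first time `π` reaches `t`, continuity and monotonicity of `π` give
`{δ(t) ≤ s} = {t ≤ π(s)}`, and `A ∩ {t ≤ π(s)}` lies in `𝓕_{π(s)}` for every `A ∈ 𝓕_t`; this gives
the stopping-time property and `𝓕_t ⊆ 𝓕̃_{δ(t)}`. Conversely `π(δ(t)) = t` by the intermediate
value theorem, so for `v > t` every path has `π(s) < v` at some `s ≥ δ(t)` from a fixed countable
set; a set `A` of the `δ(t)`-past is then a countable union of the `𝓕_v`-sets
`A ∩ {δ(t) ≤ s} ∩ {π(s) ≤ v}`, and right continuity gives `A ∈ 𝓕_t`.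
-/

open MeasureTheory Set Filter
open scoped ENNReal NNReal

noncomputable section

section StoppingTime

variable {Ω ι : Type*} {F : ι → MeasurableSpace Ω} {τ : Ω → ι}

theorem measurableSet_pastSigma_univ_iff [Preorder ι]
    (hτ : ∀ u, MeasurableSet[F u] {ω | τ ω ≤ u}) {A : Set Ω} :
    MeasurableSet[pastSigma F univ τ] A ↔ ∀ u, MeasurableSet[F u] (A ∩ {ω | τ ω ≤ u}) := by
  refine ⟨fun hA u => ?_, fun h => MeasurableSpace.measurableSet_generateFrom fun u _ => h u⟩
  induction A, hA using MeasurableSpace.generateFrom_induction with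
  | hC A hA => exact hA u (mem_univ u)
  | empty => simp
  | compl A _ ih =>
    simpa only [← sdiff_eq_compl_inter, sdiff_inter_self_eq_sdiff] using (hτ u).diff ih
  | iUnion A _ ih => simpa only [iUnion_inter] using MeasurableSet.iUnion ih

variable [LinearOrder ι] [TopologicalSpace ι] [OrderTopology ι] [DenselyOrdered ι]
  [TopologicalSpace.SeparableSpace ι]

theorem measurableSet_lt_of_stopping (hF : Monotone F)
    (hτ : ∀ u, MeasurableSet[F u] {ω | τ ω ≤ u}) (t : ι) :
    MeasurableSet[F t] {ω | τ ω < t} := by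
  obtain ⟨D, hDc, hD⟩ := TopologicalSpace.exists_countable_dense ι
  have hunion : {ω | τ ω < t} = ⋃ q ∈ D ∩ Iio t, {ω | τ ω ≤ q} := by
    ext ω
    simp only [mem_ofPred_eq, mem_iUnion, mem_inter_iff, mem_Iio, exists_prop]
    refine ⟨fun h => ?_, fun ⟨q, ⟨_, hqt⟩, hτq⟩ => hτq.trans_lt hqt⟩
    obtain ⟨q, hqD, hτq, hqt⟩ := hD.exists_between h
    exact ⟨q, ⟨hqD, hqt⟩, hτq.le⟩
  rw [hunion]
  exact MeasurableSet.biUnion (hDc.mono inter_subset_left) fun q hq => hF hq.2.le _ (hτ q)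

theorem measurableSet_pastSigma_inter_le (hF : Monotone F)
    (hτ : ∀ u, MeasurableSet[F u] {ω | τ ω ≤ u}) {t : ι} {A : Set Ω}
    (hA : MeasurableSet[F t] A) :
    MeasurableSet[pastSigma F univ τ] (A ∩ {ω | t ≤ τ ω}) := by
  refine (measurableSet_pastSigma_univ_iff hτ).2 fun u => ?_
  rcases le_or_gt t u with htu | hut
  · have hdiff : A ∩ {ω | t ≤ τ ω} ∩ {ω | τ ω ≤ u} = (A ∩ {ω | τ ω ≤ u}) \ {ω | τ ω < t} := by
      ext ω
      simp only [mem_inter_iff, Set.mem_sdiff, mem_ofPred_eq, not_lt]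
      tauto
    rw [hdiff]
    exact ((hF htu _ hA).inter (hτ u)).diff (hF htu _ (measurableSet_lt_of_stopping hF hτ t))
  · convert @MeasurableSet.empty _ (F u)
    ext ω
    simp only [mem_inter_iff, mem_ofPred_eq, mem_empty_iff_false, iff_false]
    exact fun ⟨⟨_, htτ⟩, hτu⟩ => (htτ.trans hτu).not_gt hut

end StoppingTime

theorem Dense.exists_mem_insert_ge_apply_lt {α β : Type*} [LinearOrder α] [TopologicalSpace α]
    [OrderTopology α] [DenselyOrdered α] [LinearOrder β] [TopologicalSpace β]
    [OrderClosedTopology β] {D : Set α} (hD : Dense D) {f : α → β} {x b : α} {v : β}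
    (hf : ContinuousWithinAt f (Icc x b) x) (hxb : x ≤ b) (hfx : f x < v) :
    ∃ s ∈ insert b (D ∩ Iic b), x ≤ s ∧ f s < v := by
  rcases hxb.eq_or_lt with rfl | hxb
  · exact ⟨x, mem_insert _ _, le_rfl, hfx⟩
  obtain ⟨u, hu, hsub⟩ : ∃ u ∈ Ioc x b, Ico x u ⊆ f ⁻¹' Iio v :=
    ((TFAE_mem_nhdsGE hxb _).out 1 3).1 (hf (Iio_mem_nhds hfx))
  obtain ⟨s, hsD, hxs, hsu⟩ := hD.exists_between hu.1
  exact ⟨s, mem_insert_of_mem _ ⟨hsD, (hsu.trans_le hu.2).le⟩, hxs.le, hsub ⟨hxs.le, hsu⟩⟩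

/-- The cap at `T` only matters when `f` does not reach `t` on `[0, T]`, since `sInf ∅ = 0`. -/
def firstPassage (f : ℝ≥0 → ℝ≥0) (T t : ℝ≥0) : ℝ≥0 :=
  min (sInf {s | s ≤ T ∧ t ≤ f s}) T

section FirstPassage

variable {f : ℝ≥0 → ℝ≥0} {T t s : ℝ≥0}

theorem firstPassage_le_right : firstPassage f T t ≤ T :=
  min_le_right _ _

theorem firstPassage_le (hs : s ≤ T) (h : t ≤ f s) : firstPassage f T t ≤ s :=
  min_le_of_left_le (csInf_le (OrderBot.bddBelow _) ⟨hs, h⟩)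

theorem firstPassage_mono {u : ℝ≥0} (htu : t ≤ u) (hu : u ≤ f T) :
    firstPassage f T t ≤ firstPassage f T u :=
  min_le_min_right T <| csInf_le_csInf (OrderBot.bddBelow _) ⟨T, le_rfl, hu⟩
    fun _ hs => ⟨hs.1, htu.trans hs.2⟩

theorem le_apply_firstPassage (hf : ContinuousOn f (Icc 0 T)) (ht : t ≤ f T) :
    t ≤ f (firstPassage f T t) := by
  have hclosed : IsClosed {s | s ≤ T ∧ t ≤ f s} := by
    have hset : {s | s ≤ T ∧ t ≤ f s} = Icc 0 T ∩ f ⁻¹' Ici t := by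
      ext s
      simp
    rw [hset]
    exact hf.preimage_isClosed_of_isClosed isClosed_Icc isClosed_Ici
  have hmem := hclosed.csInf_mem ⟨T, le_rfl, ht⟩ (OrderBot.bddBelow _)
  rw [firstPassage, min_eq_left hmem.1]
  exact hmem.2

theorem firstPassage_le_iff (hf : ContinuousOn f (Icc 0 T)) (hmono : MonotoneOn f (Icc 0 T))
    (ht : t ≤ f T) (hs : s ≤ T) : firstPassage f T t ≤ s ↔ t ≤ f s :=
  ⟨fun h => (le_apply_firstPassage hf ht).trans
    (hmono ⟨zero_le, firstPassage_le_right⟩ ⟨zero_le, hs⟩ h), firstPassage_le hs⟩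

theorem apply_firstPassage (hf : ContinuousOn f (Icc 0 T)) (h0 : f 0 ≤ t) (ht : t ≤ f T) :
    f (firstPassage f T t) = t := by
  obtain ⟨c, hc, hfc⟩ := intermediate_value_Icc zero_le
    (hf.mono (Icc_subset_Icc_right firstPassage_le_right)) ⟨h0, le_apply_firstPassage hf ht⟩
  have hle : firstPassage f T t ≤ c := firstPassage_le (hc.2.trans firstPassage_le_right) hfc.ge
  rwa [le_antisymm hc.2 hle] at hfc

end FirstPassage

theorem pastSigma_firstPassage_le {Ω : Type*} {F : ℝ≥0 → MeasurableSpace Ω} {T t : ℝ≥0}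
    (hFt : F t = ⨅ v ∈ Ioi t, F v) {π : ℝ≥0 → Ω → ℝ≥0}
    (hπstop : ∀ s ≤ T, ∀ u, MeasurableSet[F u] {ω | π s ω ≤ u})
    (hπcont : ∀ ω, ContinuousOn (π · ω) (Icc 0 T))
    (hπt : ∀ ω, π (firstPassage (π · ω) T t) ω = t) :
    pastSigma (fun s => pastSigma F univ (π s)) (Iic T) (fun ω => firstPassage (π · ω) T t)
      ≤ F t := by
  refine MeasurableSpace.generateFrom_le fun A hA => ?_
  rw [hFt]
  refine MeasurableSpace.measurableSet_iInf.2 fun v =>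
    MeasurableSpace.measurableSet_iInf.2 fun htv => ?_
  obtain ⟨D, hDc, hD⟩ := TopologicalSpace.exists_countable_dense ℝ≥0
  have hI : insert T (D ∩ Iic T) ⊆ Iic T :=
    insert_subset_iff.2 ⟨mem_Iic.2 le_rfl, inter_subset_right⟩
  have hcover : A = ⋃ s ∈ insert T (D ∩ Iic T),
      A ∩ {ω | firstPassage (π · ω) T t ≤ s} ∩ {ω | π s ω ≤ v} := by
    refine subset_antisymm (fun ω hω => ?_)
      (iUnion₂_subset fun _ _ => inter_subset_left.trans inter_subset_left)
    obtain ⟨s, hsI, hδs, hπs⟩ := hD.exists_mem_insert_ge_apply_lt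
      ((hπcont ω _ ⟨zero_le, firstPassage_le_right⟩).mono (Icc_subset_Icc_left zero_le))
      firstPassage_le_right ((hπt ω).trans_lt htv)
    exact mem_iUnion₂.2 ⟨s, hsI, ⟨hω, hδs⟩, hπs.le⟩
  rw [hcover]
  exact MeasurableSet.biUnion ((hDc.mono inter_subset_left).insert T) fun s hs =>
    (measurableSet_pastSigma_univ_iff (hπstop s (hI hs))).1 (hA s (hI hs)) v

theorem executionDelay_as_informationDelay_general
    {Ω : Type*}
    (F : ℝ≥0 → MeasurableSpace Ω)
    (hFmono : Monotone F)
    (hFrc : ∀ u : ℝ≥0, F u = ⨅ v ∈ Set.Ioi u, F v)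
    (T : ℝ≥0)
    (π : ℝ≥0 → Ω → ℝ≥0)
    (hπstop : ∀ s ≤ T, ∀ u : ℝ≥0, MeasurableSet[F u] {ω | π s ω ≤ u})
    (hπge : ∀ s ≤ T, ∀ ω, s ≤ π s ω)
    (hπmono : ∀ s u : ℝ≥0, s ≤ u → u ≤ T → ∀ ω, π s ω ≤ π u ω)
    (hπcont : ∀ ω, ContinuousOn (fun s => π s ω) (Set.Icc 0 T))
    (hπzero : ∀ ω, π 0 ω = 0) :
    ((∀ t ≤ T, ∀ s ≤ T, MeasurableSet[pastSigma F Set.univ (π s)]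
        {ω | min (sInf {s' : ℝ≥0 | s' ≤ T ∧ t ≤ π s' ω}) T ≤ s}) ∧
      (∀ t ≤ T, ∀ ω, min (sInf {s' : ℝ≥0 | s' ≤ T ∧ t ≤ π s' ω}) T ≤ t) ∧
      (∀ t u : ℝ≥0, t ≤ u → u ≤ T → ∀ ω,
        min (sInf {s' : ℝ≥0 | s' ≤ T ∧ t ≤ π s' ω}) T ≤
          min (sInf {s' : ℝ≥0 | s' ≤ T ∧ u ≤ π s' ω}) T)) ∧
    (∀ t ≤ T,
      pastSigma (fun s => pastSigma F Set.univ (π s)) (Set.Iic T)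
        (fun ω => min (sInf {s' : ℝ≥0 | s' ≤ T ∧ t ≤ π s' ω}) T) = F t) := by
  have hreach : ∀ t ≤ T, ∀ ω, t ≤ π T ω := fun t ht ω => ht.trans (hπge T le_rfl ω)
  have hevent : ∀ t ≤ T, ∀ s ≤ T, {ω | firstPassage (π · ω) T t ≤ s} = {ω | t ≤ π s ω} :=
    fun t ht s hs => Set.ext fun ω => firstPassage_le_iff (hπcont ω)
      (fun a _ b hb hab => hπmono a b hab hb.2 ω) (hreach t ht ω) hs
  refine ⟨⟨fun t ht s hs => ?_, fun t ht ω => firstPassage_le ht (hπge t ht ω),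
    fun t u htu huT ω => firstPassage_mono htu (hreach u huT ω)⟩, fun t ht => le_antisymm ?_ ?_⟩
  · change MeasurableSet[pastSigma F univ (π s)] {ω | firstPassage (π · ω) T t ≤ s}
    rw [hevent t ht s hs]
    simpa using measurableSet_pastSigma_inter_le hFmono (hπstop s hs) (@MeasurableSet.univ _ (F t))
  · exact pastSigma_firstPassage_le (hFrc t) hπstop hπcont fun ω =>
      apply_firstPassage (hπcont ω) ((hπzero ω).trans_le zero_le) (hreach t ht ω)
  · refine fun A hA => MeasurableSpace.measurableSet_generateFrom fun s hs => ?_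
    change MeasurableSet[pastSigma F univ (π s)] (A ∩ {ω | firstPassage (π · ω) T t ≤ s})
    rw [hevent t ht s hs]
    exact measurableSet_pastSigma_inter_le hFmono (hπstop s hs) hA

/-- Let `𝔽 = (𝓕_u)_{u∈ℝ₊}` be right-continuous and `π` a pathwise
continuous order execution delay for `𝔽` with `π(0) = 0`.  With `𝓕̃_s := 𝓕_{π(s)}` and
`δ(t,ω) := min(inf {s ∈ [0,T] : π(s,ω) ≥ t}, T)`:
(i) `δ` is an information delay for `𝔽̃ = (𝓕̃_s)_{s∈[0,T]}`; and
(ii) the `δ`-delayed filtration of `𝔽̃` recovers `𝔽`: the σ-field of the `δ(t)`-past with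
respect to `𝔽̃` equals `𝓕_t` for every `t ∈ [0,T]`. -/
theorem executionDelay_as_informationDelay
    {Ω : Type*} [m𝒢 : MeasurableSpace Ω] (P : Measure Ω) [IsProbabilityMeasure P]
    (F : ℝ≥0 → MeasurableSpace Ω)
    (hFle : ∀ u, F u ≤ m𝒢) (hFmono : Monotone F)
    (hFrc : ∀ u : ℝ≥0, F u = ⨅ v ∈ Set.Ioi u, F v)
    (T : ℝ≥0) (hT : 0 < T)
    (π : ℝ≥0 → Ω → ℝ≥0)
    (hπstop : ∀ s ≤ T, ∀ u : ℝ≥0, MeasurableSet[F u] {ω | π s ω ≤ u})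
    (hπge : ∀ s ≤ T, ∀ ω, s ≤ π s ω)
    (hπmono : ∀ s u : ℝ≥0, s ≤ u → u ≤ T → ∀ ω, π s ω ≤ π u ω)
    (hπcont : ∀ ω, ContinuousOn (fun s => π s ω) (Set.Icc 0 T))
    (hπzero : ∀ ω, π 0 ω = 0) :
    ((∀ t ≤ T, ∀ s ≤ T, MeasurableSet[pastSigma F Set.univ (π s)]
        {ω | min (sInf {s' : ℝ≥0 | s' ≤ T ∧ t ≤ π s' ω}) T ≤ s}) ∧
      (∀ t ≤ T, ∀ ω, min (sInf {s' : ℝ≥0 | s' ≤ T ∧ t ≤ π s' ω}) T ≤ t) ∧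
      (∀ t u : ℝ≥0, t ≤ u → u ≤ T → ∀ ω,
        min (sInf {s' : ℝ≥0 | s' ≤ T ∧ t ≤ π s' ω}) T ≤
          min (sInf {s' : ℝ≥0 | s' ≤ T ∧ u ≤ π s' ω}) T)) ∧
    (∀ t ≤ T,
      pastSigma (fun s => pastSigma F Set.univ (π s)) (Set.Iic T)
        (fun ω => min (sInf {s' : ℝ≥0 | s' ≤ T ∧ t ≤ π s' ω}) T) = F t) :=
  executionDelay_as_informationDelay_general F hFmono hFrc T π hπstop hπge hπmono hπcont hπzero
end
end

section
/- Let (Ω, 𝒢, P) be a probability space, T ∈ (0,∞], I a set, and (𝒜, (𝔽^A)_{A∈𝒜}) an index system on I with filtrations of sub-σ-algebras of 𝒢. Let δ = (δ^A)_{A∈𝒜} be a family of information delays, each δ^A an information delay for 𝔽^A, and let (𝓕^{A,δ}_t) be the recursively defined δ-delayed filtrations. Then the family (𝔽^{A,δ})_{A∈𝒜} agrees with the index system: (i) for every A ∈ 𝒜, (𝓕^{A,δ}_t)_{t∈[0,T]} is a filtration, i.e. 𝓕^{A,δ}_t ⊆ 𝓕^{A,δ}_u whenever t ≤ u; and (ii)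 for all A, A' ∈ 𝒜 with A ⊆ A', 𝓕^{A,δ}_t ⊆ 𝓕^{A',δ}_t for all t ∈ [0,T]. -/
open MeasureTheory Set Filter
open scoped ENNReal NNReal

noncomputable section

/-!
If `σ ≤ τ` pointwise and `τ` is a stopping time, a set `B` in the `σ`-past lies in the `τ`-past,
since `B ∩ {τ ≤ s} = (B ∩ {σ ≤ s}) ∩ {τ ≤ s}`. Applied to `δ^A(t) ≤ δ^A(u)` this makes the
delayed σ-fields increasing in time, by strong induction on `|A|`. Monotonicity in `A` is
immediate: for `A ⊊ A'` in `𝒜`, `𝓕^{A,δ}_t` is one of the generators of `𝓕^{A',δ}_t`.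
-/

lemma pastSigma_mono {Ω ι : Type*} [Preorder ι] {F : ι → MeasurableSpace Ω} {D : Set ι}
    {σ τ : Ω → ι} (hτ : ∀ s ∈ D, MeasurableSet[F s] {ω | τ ω ≤ s}) (hστ : ∀ ω, σ ω ≤ τ ω) :
    pastSigma F D σ ≤ pastSigma F D τ := by
  refine MeasurableSpace.generateFrom_mono fun B hB s hs => ?_
  have hsub : {ω | τ ω ≤ s} ⊆ {ω | σ ω ≤ s} := fun ω hτs => (hστ ω).trans hτs
  have hsplit : B ∩ {ω | τ ω ≤ s} = (B ∩ {ω | σ ω ≤ s}) ∩ {ω | τ ω ≤ s} := by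
    rw [Set.inter_assoc, Set.inter_eq_right.mpr hsub]
  rw [hsplit]
  exact (hB s hs).inter (hτ s hs)

section DelayedFiltration

variable {Ω I : Type*} {F : Finset I → ℝ≥0∞ → MeasurableSpace Ω} {T : ℝ≥0∞}
  {𝒜 : Set (Finset I)} {δ : Finset I → ℝ≥0∞ → Ω → ℝ≥0∞}

lemma delayedFiltration_le_of_ssubset {A A' : Finset I} (hA : A ∈ 𝒜) (hAA' : A ⊂ A')
    (t : ℝ≥0∞) : delayedFiltration F T 𝒜 δ A t ≤ delayedFiltration F T 𝒜 δ A' t := by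
  conv_rhs => rw [delayedFiltration]
  exact le_sup_of_le_right (le_iSup₂_of_le A hA (le_iSup_of_le hAA' le_rfl))

lemma delayedFiltration_le_of_subset {A A' : Finset I} (hA : A ∈ 𝒜) (hAA' : A ⊆ A')
    (t : ℝ≥0∞) : delayedFiltration F T 𝒜 δ A t ≤ delayedFiltration F T 𝒜 δ A' t := by
  rcases hAA'.ssubset_or_eq with hss | rfl
  · exact delayedFiltration_le_of_ssubset hA hss t
  · exact le_rfl

lemma delayedFiltration_mono_time (hδ : ∀ A ∈ 𝒜, IsInformationDelay (F A) T (δ A))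
    (A : Finset I) (hA : A ∈ 𝒜) {t u : ℝ≥0∞} (htu : t ≤ u) (huT : u ≤ T) :
    delayedFiltration F T 𝒜 δ A t ≤ delayedFiltration F T 𝒜 δ A u := by
  induction A using Finset.strongInduction with
  | H A ih =>
    obtain ⟨hstop, -, hmono⟩ := hδ A hA
    rw [delayedFiltration, delayedFiltration]
    refine sup_le_sup (pastSigma_mono (hstop u huT) (hmono t u htu huT)) ?_
    exact iSup₂_mono fun A' hA' => iSup_mono fun hss => ih A' hss hA'

end DelayedFiltration

theorem delayedFiltration_agrees_with_indexSystem_general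
    {Ω I : Type*}
    (T : ℝ≥0∞)
    (𝒜 : Set (Finset I))
    (F : Finset I → ℝ≥0∞ → MeasurableSpace Ω)
    (δ : Finset I → ℝ≥0∞ → Ω → ℝ≥0∞)
    (hδ : ∀ A ∈ 𝒜, IsInformationDelay (F A) T (δ A)) :
    (∀ A ∈ 𝒜, ∀ t u : ℝ≥0∞, t ≤ u → u ≤ T →
      delayedFiltration F T 𝒜 δ A t ≤ delayedFiltration F T 𝒜 δ A u) ∧
    (∀ A ∈ 𝒜, ∀ A' ∈ 𝒜, A ⊆ A' → ∀ t ≤ T,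
      delayedFiltration F T 𝒜 δ A t ≤ delayedFiltration F T 𝒜 δ A' t) :=
  ⟨fun A hA _ _ htu huT => delayedFiltration_mono_time hδ A hA htu huT,
    fun _ hA _ _ hAA' t _ => delayedFiltration_le_of_subset hA hAA' t⟩

/-- The family of `δ`-delayed filtrations agrees with the index system:
(i) each `(𝓕^{A,δ}_t)_{t∈[0,T]}` is a filtration, and (ii) it is monotone in `A ∈ 𝒜`. -/
theorem delayedFiltration_agrees_with_indexSystem
    {Ω I : Type*} [DecidableEq I] [m𝒢 : MeasurableSpace Ω]
    (P : Measure Ω) [IsProbabilityMeasure P]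
    (T : ℝ≥0∞) (hT : 0 < T)
    (𝒜 : Set (Finset I)) (h𝒜 : ∀ A₁ ∈ 𝒜, ∀ A₂ ∈ 𝒜, A₁ ∪ A₂ ∈ 𝒜)
    (F : Finset I → ℝ≥0∞ → MeasurableSpace Ω)
    (hFfilt : ∀ A ∈ 𝒜, ∀ s t : ℝ≥0∞, s ≤ t → t ≤ T → F A s ≤ F A t)
    (hFle : ∀ A ∈ 𝒜, ∀ t ≤ T, F A t ≤ m𝒢)
    (hFmono : ∀ A ∈ 𝒜, ∀ A' ∈ 𝒜, A ⊆ A' → ∀ t ≤ T, F A t ≤ F A' t)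
    (δ : Finset I → ℝ≥0∞ → Ω → ℝ≥0∞)
    (hδ : ∀ A ∈ 𝒜, IsInformationDelay (F A) T (δ A)) :
    (∀ A ∈ 𝒜, ∀ t u : ℝ≥0∞, t ≤ u → u ≤ T →
      delayedFiltration F T 𝒜 δ A t ≤ delayedFiltration F T 𝒜 δ A u) ∧
    (∀ A ∈ 𝒜, ∀ A' ∈ 𝒜, A ⊆ A' → ∀ t ≤ T,
      delayedFiltration F T 𝒜 δ A t ≤ delayedFiltration F T 𝒜 δ A' t) :=
  delayedFiltration_agrees_with_indexSystem_general T 𝒜 F δ hδ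
end
end

section
/- Let (Ω, 𝒢, P) be a probability space, T ∈ (0,∞], I a set, and (𝒜, (𝔽^A)_{A∈𝒜}) an index system on I with filtrations of sub-σ-algebras of 𝒢. Let δ = (δ^A)_{A∈𝒜} be a family of information delays, each δ^A an information delay for 𝔽^A, and let (𝓕^{A,δ}_t) be the recursively defined δ-delayed filtrations. Then the delayed filtration is coarser than the original: for every A ∈ 𝒜 and every t ∈ [0,T], 𝓕^{A,δ}_t ⊆ 𝓕^A_t. -/
open MeasureTheory Set Filter
open scoped ENNReal NNReal

noncomputable section

/-! A set `S` in the `τ`-past satisfies `S ∩ {τ ≤ t} ∈ 𝓕_t`; when `τ ≤ t` everywhere, the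
intersection is `S` itself. Hence the delayed σ-field of `A` lies in `𝓕^A_t`, and the parts
coming from proper subsets `A' ⊊ A` do so by induction on `A` and monotonicity of `𝓕` in `A`. -/

theorem pastSigma_le_of_forall_le {Ω ι : Type*} [Preorder ι] (F : ι → MeasurableSpace Ω)
    {D : Set ι} {τ : Ω → ι} {t : ι} (ht : t ∈ D) (hτ : ∀ ω, τ ω ≤ t) :
    pastSigma F D τ ≤ F t := by
  refine MeasurableSpace.generateFrom_le fun S hS => ?_
  have hS_inter : S ∩ {ω | τ ω ≤ t} = S := by
    simp [hτ]
  simpa only [hS_inter] using hS t ht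

theorem delayedFiltration_le_general
    {Ω I : Type*}
    (T : ℝ≥0∞)
    (𝒜 : Set (Finset I))
    (F : Finset I → ℝ≥0∞ → MeasurableSpace Ω)
    (hFmono : ∀ A ∈ 𝒜, ∀ A' ∈ 𝒜, A ⊆ A' → ∀ t ≤ T, F A t ≤ F A' t)
    (δ : Finset I → ℝ≥0∞ → Ω → ℝ≥0∞)
    (hδ : ∀ A ∈ 𝒜, IsInformationDelay (F A) T (δ A)) :
    ∀ A ∈ 𝒜, ∀ t ≤ T, delayedFiltration F T 𝒜 δ A t ≤ F A t := by
  intro A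
  induction A using Finset.strongInduction with
  | _ A ih =>
    intro hA t ht
    rw [delayedFiltration]
    refine sup_le (pastSigma_le_of_forall_le _ ht ((hδ A hA).2.1 t ht)) ?_
    refine iSup₂_le fun A' hA' => iSup_le fun hA'A => ?_
    exact (ih A' hA'A hA' t ht).trans (hFmono A' hA' A hA hA'A.subset t ht)

/-- The `δ`-delayed filtration is coarser than the original:
`𝓕^{A,δ}_t ⊆ 𝓕^A_t` for every `A ∈ 𝒜` and `t ∈ [0,T]`. -/
theorem delayedFiltration_le
    {Ω I : Type*} [DecidableEq I] [m𝒢 : MeasurableSpace Ω]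
    (P : Measure Ω) [IsProbabilityMeasure P]
    (T : ℝ≥0∞) (hT : 0 < T)
    (𝒜 : Set (Finset I)) (h𝒜 : ∀ A₁ ∈ 𝒜, ∀ A₂ ∈ 𝒜, A₁ ∪ A₂ ∈ 𝒜)
    (F : Finset I → ℝ≥0∞ → MeasurableSpace Ω)
    (hFfilt : ∀ A ∈ 𝒜, ∀ s t : ℝ≥0∞, s ≤ t → t ≤ T → F A s ≤ F A t)
    (hFle : ∀ A ∈ 𝒜, ∀ t ≤ T, F A t ≤ m𝒢)
    (hFmono : ∀ A ∈ 𝒜, ∀ A' ∈ 𝒜, A ⊆ A' → ∀ t ≤ T, F A t ≤ F A' t)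
    (δ : Finset I → ℝ≥0∞ → Ω → ℝ≥0∞)
    (hδ : ∀ A ∈ 𝒜, IsInformationDelay (F A) T (δ A)) :
    ∀ A ∈ 𝒜, ∀ t ≤ T, delayedFiltration F T 𝒜 δ A t ≤ F A t :=
  delayedFiltration_le_general T 𝒜 F hFmono δ hδ
end
end

section
/- Let (Ω, 𝒢, P) be a probability space and 𝕀̃ = (𝕀̃_u)_{u∈ℝ₊} a filtration. Let T ∈ (0,∞). Let π = (π(s))_{s∈ℝ₊} be pathwise continuous, pathwise monotone nondecreasing, with s ≤ π(s,ω) for all s ∈ ℝ₊ and ω, and with each π(s) an 𝕀̃-stopping time; let π̃ = (π̃(t))_{t∈[0,T]} be pathwise monotone nondecreasing with t ≤ π̃(t,ω), each π̃(t) an 𝕀̃-stopping time; and assume π(t,ω) ≤ π̃(t,ω) for all t ∈ [0,T] and ω. Define π̂(t,ω) := inf{s ∈ ℝ₊ : π(s,ω) ≥ π̃(t,ω)}. Then: (i) π(π̂(t,ω),ω) = π̃(t,ω) for all t, ω, so that for any process S the π̃-delayed value equals the π̂-delay of the π-delayed process: S_{π(π̂(t))} = S_{π̃(t)}; (ii)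 π̂ is pathwise monotone: π̂(t,ω) ≤ π̂(u,ω) for t ≤ u; (iii) for all t ∈ [0,T] and u ∈ ℝ₊, {π̂(t) ≤ u} = {π̃(t) ≤ π(u)} ∈ 𝕀̃_{π(u)}, the σ-field of the π(u)-past; (iv) if in addition π is pathwise strictly monotone (π(s,ω) < π(u,ω) for s < u), then t ≤ π̂(t,ω) for all t, ω. Consequently π̂ is an order execution delay for the time-changed filtration (𝕀̃_{π(t)})_{t∈ℝ₊}. -/
/-!
For fixed `ω`, `π̂(t)` is the generalized inverse of the continuous nondecreasing path
`s ↦ π(s)` evaluated at level `π̃(t)`. Since `π(0) ≤ π(t) ≤ π̃(t) ≤ π(π̃(t))`, the intermediate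
value theorem shows that the level is attained, and closedness of `{s | π̃(t) ≤ π(s)}` shows it
is attained at the infimum; this gives `π(π̂(t)) = π̃(t)` and the Galois connection
`π̂(t) ≤ u ↔ π̃(t) ≤ π(u)`. The event `{π̃(t) ≤ π(u)}` compares two stopping times, so it lies in
the past of `π(u)`.
-/

open MeasureTheory Set Filter
open scoped ENNReal NNReal

noncomputable section

section GeneralizedInverse

variable {α β : Type*} [ConditionallyCompleteLinearOrderBot α] [LinearOrder β] {f : α → β}
  {c : β}

theorem csInf_setOf_le_mono {d : β} (hcd : c ≤ d) (hd : {s | d ≤ f s}.Nonempty) :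
    sInf {s | c ≤ f s} ≤ sInf {s | d ≤ f s} :=
  csInf_le_csInf (OrderBot.bddBelow _) hd fun _ hs => hcd.trans hs

theorem le_csInf_setOf_le_of_strictMono (hf : StrictMono f) {t : α} (ht : f t ≤ c)
    (hc : {s | c ≤ f s}.Nonempty) : t ≤ sInf {s | c ≤ f s} :=
  le_csInf hc fun _ hs => hf.le_iff_le.1 (ht.trans hs)

variable [TopologicalSpace α] [OrderTopology α] [TopologicalSpace β] [OrderClosedTopology β]

theorem le_apply_csInf_setOf_le (hf : Continuous f) (hc : {s | c ≤ f s}.Nonempty) :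
    c ≤ f (sInf {s | c ≤ f s}) :=
  (isClosed_Ici.preimage hf).csInf_mem hc (OrderBot.bddBelow _)

theorem csInf_setOf_le_le_iff (hf : Continuous f) (hmono : Monotone f)
    (hc : {s | c ≤ f s}.Nonempty) {u : α} : sInf {s | c ≤ f s} ≤ u ↔ c ≤ f u :=
  ⟨fun h => (le_apply_csInf_setOf_le hf hc).trans (hmono h),
    fun h => csInf_le (OrderBot.bddBelow _) h⟩

theorem apply_csInf_setOf_le [DenselyOrdered α] (hf : Continuous f) (hmono : Monotone f)
    (hbot : f ⊥ ≤ c) (hc : {s | c ≤ f s}.Nonempty) : f (sInf {s | c ≤ f s}) = c := by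
  obtain ⟨s, hs⟩ := hc
  obtain ⟨x, -, hx⟩ := intermediate_value_Icc bot_le hf.continuousOn ⟨hbot, hs⟩
  refine le_antisymm ?_ (le_apply_csInf_setOf_le hf ⟨s, hs⟩)
  calc f (sInf {s | c ≤ f s}) ≤ f x := hmono (csInf_le (OrderBot.bddBelow _) hx.ge)
    _ = c := hx

end GeneralizedInverse

section PastSigma

variable {Ω ι : Type*} {m : MeasurableSpace Ω}

theorem measurableSet_pastSigma_of_measurableSet_stoppingTime [Preorder ι] {F : Filtration ι m}
    {τ : Ω → ι} (hτ : IsStoppingTime F fun ω => (τ ω : WithTop ι)) {A : Set Ω}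
    (hA : MeasurableSet[hτ.measurableSpace] A) : MeasurableSet[pastSigma F univ τ] A :=
  MeasurableSpace.measurableSet_generateFrom fun i _ => by simpa using hA.2 i

theorem measurableSet_setOf_le_pastSigma [LinearOrder ι] [TopologicalSpace ι] [OrderTopology ι]
    [SecondCountableTopology ι] {F : Filtration ι m} {σ τ : Ω → ι}
    (hσ : ∀ i, MeasurableSet[F i] {ω | σ ω ≤ i})
    (hτ : ∀ i, MeasurableSet[F i] {ω | τ ω ≤ i}) :
    MeasurableSet[pastSigma F univ σ] {ω | τ ω ≤ σ ω} := by
  have hσ' : IsStoppingTime F fun ω => (σ ω : WithTop ι) := fun i => by simpa using hσ i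
  have hτ' : IsStoppingTime F fun ω => (τ ω : WithTop ι) := fun i => by simpa using hτ i
  simpa using measurableSet_pastSigma_of_measurableSet_stoppingTime hσ'
    (hτ'.measurableSet_stopping_time_le hσ')

end PastSigma

theorem superimposed_executionDelay_general
    {Ω : Type*} [m𝒢 : MeasurableSpace Ω]
    (𝕀t : ℝ≥0 → MeasurableSpace Ω) (h𝕀le : ∀ u, 𝕀t u ≤ m𝒢) (h𝕀mono : Monotone 𝕀t)
    (T : ℝ≥0)
    (π : ℝ≥0 → Ω → ℝ≥0)
    (hπcont : ∀ ω, Continuous fun s => π s ω)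
    (hπmono : ∀ ω, Monotone fun s => π s ω)
    (hπge : ∀ s ω, s ≤ π s ω)
    (hπstop : ∀ s, ∀ u : ℝ≥0, MeasurableSet[𝕀t u] {ω | π s ω ≤ u})
    (πt : ℝ≥0 → Ω → ℝ≥0)
    (hπtmono : ∀ t u : ℝ≥0, t ≤ u → u ≤ T → ∀ ω, πt t ω ≤ πt u ω)
    (hπtstop : ∀ t ≤ T, ∀ u : ℝ≥0, MeasurableSet[𝕀t u] {ω | πt t ω ≤ u})
    (hle : ∀ t ≤ T, ∀ ω, π t ω ≤ πt t ω) :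
    (∀ t ≤ T, ∀ ω, π (sInf {s : ℝ≥0 | πt t ω ≤ π s ω}) ω = πt t ω) ∧
    (∀ t u : ℝ≥0, t ≤ u → u ≤ T → ∀ ω,
      sInf {s : ℝ≥0 | πt t ω ≤ π s ω} ≤ sInf {s : ℝ≥0 | πt u ω ≤ π s ω}) ∧
    (∀ t ≤ T, ∀ u : ℝ≥0,
      {ω | sInf {s : ℝ≥0 | πt t ω ≤ π s ω} ≤ u} = {ω | πt t ω ≤ π u ω} ∧
      MeasurableSet[pastSigma 𝕀t Set.univ (π u)]
        {ω | sInf {s : ℝ≥0 | πt t ω ≤ π s ω} ≤ u}) ∧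
    ((∀ ω, StrictMono fun s => π s ω) →
      ∀ t ≤ T, ∀ ω, t ≤ sInf {s : ℝ≥0 | πt t ω ≤ π s ω}) := by
  have hne : ∀ t ω, {s | πt t ω ≤ π s ω}.Nonempty := fun t ω => ⟨πt t ω, hπge _ ω⟩
  refine ⟨fun t ht ω => ?_, fun t u htu huT ω => ?_, fun t ht u => ?_,
    fun hstrict t ht ω => ?_⟩
  · exact apply_csInf_setOf_le (hπcont ω) (hπmono ω) ((hπmono ω bot_le).trans (hle t ht ω))
      (hne t ω)
  · exact csInf_setOf_le_mono (hπtmono t u htu huT ω) (hne u ω)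
  · have hevent : {ω | sInf {s | πt t ω ≤ π s ω} ≤ u} = {ω | πt t ω ≤ π u ω} :=
      Set.ext fun ω => csInf_setOf_le_le_iff (hπcont ω) (hπmono ω) (hne t ω)
    exact ⟨hevent, hevent ▸ measurableSet_setOf_le_pastSigma (F := ⟨𝕀t, h𝕀mono, h𝕀le⟩)
      (hπstop u) (hπtstop t ht)⟩
  · exact le_csInf_setOf_le_of_strictMono (hstrict ω) (hle t ht ω) (hne t ω)

/-- Superimposing a slower execution delay `π̃` on a faster pathwise
continuous one `π`: with `π̂(t,ω) := inf {s : π(s,ω) ≥ π̃(t,ω)}` we have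
(i) `π(π̂(t)) = π̃(t)` (so `S_{π(π̂(t))} = S_{π̃(t)}` for any process `S`);
(ii) `π̂` is pathwise monotone;
(iii) `{π̂(t) ≤ u} = {π̃(t) ≤ π(u)}` belongs to `𝕀̃_{π(u)}`, the σ-field of the
`π(u)`-past; and
(iv) if `π` is pathwise strictly monotone then `t ≤ π̂(t)`.
Consequently `π̂` is an order execution delay for the time-changed filtration
`(𝕀̃_{π(t)})_{t∈ℝ₊}`. -/
theorem superimposed_executionDelay
    {Ω : Type*} [m𝒢 : MeasurableSpace Ω] (P : Measure Ω) [IsProbabilityMeasure P]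
    (𝕀t : ℝ≥0 → MeasurableSpace Ω) (h𝕀le : ∀ u, 𝕀t u ≤ m𝒢) (h𝕀mono : Monotone 𝕀t)
    (T : ℝ≥0) (hT : 0 < T)
    (π : ℝ≥0 → Ω → ℝ≥0)
    (hπcont : ∀ ω, Continuous fun s => π s ω)
    (hπmono : ∀ ω, Monotone fun s => π s ω)
    (hπge : ∀ s ω, s ≤ π s ω)
    (hπstop : ∀ s, ∀ u : ℝ≥0, MeasurableSet[𝕀t u] {ω | π s ω ≤ u})
    (πt : ℝ≥0 → Ω → ℝ≥0)
    (hπtmono : ∀ t u : ℝ≥0, t ≤ u → u ≤ T → ∀ ω, πt t ω ≤ πt u ω)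
    (hπtge : ∀ t ≤ T, ∀ ω, t ≤ πt t ω)
    (hπtstop : ∀ t ≤ T, ∀ u : ℝ≥0, MeasurableSet[𝕀t u] {ω | πt t ω ≤ u})
    (hle : ∀ t ≤ T, ∀ ω, π t ω ≤ πt t ω) :
    (∀ t ≤ T, ∀ ω, π (sInf {s : ℝ≥0 | πt t ω ≤ π s ω}) ω = πt t ω) ∧
    (∀ t u : ℝ≥0, t ≤ u → u ≤ T → ∀ ω,
      sInf {s : ℝ≥0 | πt t ω ≤ π s ω} ≤ sInf {s : ℝ≥0 | πt u ω ≤ π s ω}) ∧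
    (∀ t ≤ T, ∀ u : ℝ≥0,
      {ω | sInf {s : ℝ≥0 | πt t ω ≤ π s ω} ≤ u} = {ω | πt t ω ≤ π u ω} ∧
      MeasurableSet[pastSigma 𝕀t Set.univ (π u)]
        {ω | sInf {s : ℝ≥0 | πt t ω ≤ π s ω} ≤ u}) ∧
    ((∀ ω, StrictMono fun s => π s ω) →
      ∀ t ≤ T, ∀ ω, t ≤ sInf {s : ℝ≥0 | πt t ω ≤ π s ω}) :=
  superimposed_executionDelay_general (m𝒢 := m𝒢) 𝕀t h𝕀le h𝕀mono T π hπcont hπmono hπge hπstop πt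
    hπtmono hπtstop hle
end
end

section
/- Let 𝔽 = (𝓕_u)_{u∈ℝ₊} be a filtration on a measurable space (Ω, 𝒢), let t ∈ ℝ₊, n ∈ ℕ, and let σ_1, …, σ_n be 𝔽-stopping times such that σ_i(ω) ≤ t for all i and all ω ∈ Ω, and such that for every ω ∈ Ω there exists some i ∈ {1,…,n} with σ_i(ω) = t. Then σ(⋃_{i=1}^n 𝓕_{σ_i}) = 𝓕_t, where 𝓕_{σ_i} denotes the σ-field of the σ_i-past. -/
/-!
Each `𝓕_{σ_i}` lies in `𝓕_t` because `σ_i ≤ t`. Conversely, on the event `{σ_i = t}` the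
`σ_i`-past agrees with `𝓕_t`: for `A ∈ 𝓕_t` the set `A ∩ {σ_i = t}` belongs to `𝓕_{σ_i}`.
Since the events `{σ_i = t}` cover `Ω`, every `A ∈ 𝓕_t` is the finite union of these pieces.
-/

open MeasureTheory Set Filter
open scoped ENNReal NNReal

noncomputable section

section PastSigma

variable {Ω ι : Type*} {F : ι → MeasurableSpace Ω} {D : Set ι} {τ : Ω → ι} {t : ι}

theorem pastSigma_le_of_le [Preorder ι] (ht : t ∈ D) (hτ : ∀ ω, τ ω ≤ t) :
    pastSigma F D τ ≤ F t := by
  refine MeasurableSpace.generateFrom_le fun A hA => ?_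
  simpa [hτ] using hA t ht

theorem measurableSet_pastSigma_inter_eq [PartialOrder ι] (hF : Monotone F) {A : Set Ω}
    (hA : MeasurableSet[F t] (A ∩ {ω | τ ω = t})) :
    MeasurableSet[pastSigma F D τ] (A ∩ {ω | τ ω = t}) := by
  refine MeasurableSpace.measurableSet_generateFrom fun s _ => ?_
  by_cases hts : t ≤ s
  · have hsub : A ∩ {ω | τ ω = t} ⊆ {ω | τ ω ≤ s} := fun ω hω => hω.2.trans_le hts
    rw [inter_eq_left.mpr hsub]
    exact hF hts _ hA
  · have hempty : A ∩ {ω | τ ω = t} ∩ {ω | τ ω ≤ s} = ∅ :=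
      eq_empty_of_forall_notMem fun ω ⟨⟨_, hτt⟩, hτs⟩ => hts (hτt ▸ hτs)
    rw [hempty]
    exact @MeasurableSet.empty _ (F s)

theorem measurableSet_eq_of_forall_measurableSet_le [m : MeasurableSpace Ω] [LinearOrder ι]
    [TopologicalSpace ι] [OrderTopology ι] [FirstCountableTopology ι] (hFmono : Monotone F)
    (hFle : ∀ u, F u ≤ m) (hτ : ∀ u, MeasurableSet[F u] {ω | τ ω ≤ u}) :
    MeasurableSet[F t] {ω | τ ω = t} := by
  have hτ' : IsStoppingTime (⟨F, hFmono, hFle⟩ : Filtration ι m) (fun ω => (τ ω : WithTop ι)) :=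
    fun u => by simpa using hτ u
  simpa using hτ'.measurableSet_eq t

end PastSigma

/-- If `σ_1, …, σ_n` are `𝔽`-stopping times bounded above by `t` such
that for every `ω` some `σ_i(ω)` equals `t`, then `σ(⋃_i 𝓕_{σ_i}) = 𝓕_t`. -/
theorem iSup_pastSigma_eq
    {Ω : Type*} [m𝒢 : MeasurableSpace Ω]
    (F : ℝ≥0 → MeasurableSpace Ω) (hFmono : Monotone F) (hFle : ∀ u, F u ≤ m𝒢)
    (t : ℝ≥0) (n : ℕ) (σs : Fin n → Ω → ℝ≥0)
    (hstop : ∀ i, ∀ u : ℝ≥0, MeasurableSet[F u] {ω | σs i ω ≤ u})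
    (hle : ∀ i ω, σs i ω ≤ t)
    (hcover : ∀ ω, ∃ i, σs i ω = t) :
    (⨆ i, pastSigma F Set.univ (σs i)) = F t := by
  refine le_antisymm (iSup_le fun i => pastSigma_le_of_le (mem_univ t) (hle i)) fun A hA => ?_
  have hA_eq : A = ⋃ i, A ∩ {ω | σs i ω = t} := by
    rw [← inter_iUnion, (iUnion_eq_univ_iff (f := fun i => {ω | σs i ω = t})).mpr hcover,
      inter_univ]
  rw [hA_eq]
  refine MeasurableSet.iUnion fun i => le_iSup (fun i => pastSigma F univ (σs i)) i _ ?_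
  exact measurableSet_pastSigma_inter_eq hFmono
    (hA.inter (measurableSet_eq_of_forall_measurableSet_le hFmono hFle (hstop i)))
end
end

section
/- Let (Ω, 𝒢, P) be a probability space, 𝔾 = (𝓖_u)_{u∈ℝ₊} a filtration, and I an index set. For each a ∈ I let S^a : ℝ₊ × Ω → ℝ be progressively measurable with respect to 𝔾, and let π^a = (π^a(t))_{t∈[0,T]} be an order execution delay with ℝ₊-valued π^a(t) that are 𝔾-stopping times. Define 𝓖^π_t := σ(⋃_{b∈I} 𝓖_{π^b(t)}) for t ∈ [0,T], and assume each π^a is progressively measurable with respect to 𝔾^π = (𝓖^π_t), i.e. for every t ∈ [0,T] the map (u,ω) ↦ π^a(u,ω) restricted to [0,t] × Ω is 𝓑([0,t]) ⊗ 𝓖^π_t-measurable. Then for every a ∈ I the delayed process S^{a,π} : (t,ω) ↦ S^a(π^a(t,ω), ω) is progressively measurable with respect to 𝔾^π. -/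
/-!
Fix `t ≤ T` and put `τ := π^a(t)`, a stopping time with `π^a(u) ≤ τ` for `u ≤ t`, so that
`S^a(π^a(u,ω),ω) = S^a(min (π^a(u,ω)) (τ ω), ω)`. Since `𝓖_τ ⊆ 𝓖^π_t`, it suffices that
`(v,ω) ↦ S^a(min v (τ ω), ω)` is `𝓑 ⊗ 𝓖_τ`-measurable. On `{τ ≤ v}` this is the stopped value
`S^a(τ)`, which is `𝓖_τ`-measurable. On `{v < τ}` choose a rational `q` with `v ≤ q < τ`: there
the map is `S^a(min v q, ·)`, which is `𝓑 ⊗ 𝓖_q`-measurable, and a `𝓖_q`-set intersected with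
`{q < τ}` lies in `𝓖_τ`.
-/

open MeasureTheory Set Filter
open scoped ENNReal NNReal

noncomputable section

/-- Progressive measurability of `S` with respect to the family of σ-algebras `G`:
for each `t`, the restriction of `S` to `[0,t] × Ω` is `ℬ([0,t]) ⊗ G t`-measurable. -/
def ProgMeasurableOn {Ω ι E : Type*} [MeasurableSpace ι] [Preorder ι] [MeasurableSpace E]
    (G : ι → MeasurableSpace Ω) (S : ι → Ω → E) : Prop :=
  ∀ t : ι, Measurable[MeasurableSpace.prod Subtype.instMeasurableSpace (G t)]
    (fun p : Set.Iic t × Ω => S (↑p.1) p.2)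

section LinearOrder

variable {Ω ι : Type*} [LinearOrder ι] {G : ι → MeasurableSpace Ω} {τ : Ω → ι}

theorem measurableSet_pastSigma_of_forall {A : Set Ω}
    (h : ∀ s, MeasurableSet[G s] (A ∩ {ω | τ ω ≤ s})) :
    MeasurableSet[pastSigma G univ τ] A :=
  MeasurableSpace.measurableSet_generateFrom fun s _ => h s

theorem measurableSet_pastSigma_le (hG : Monotone G)
    (hτ : ∀ s, MeasurableSet[G s] {ω | τ ω ≤ s}) (c : ι) :
    MeasurableSet[pastSigma G univ τ] {ω | τ ω ≤ c} := by
  refine measurableSet_pastSigma_of_forall fun s => ?_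
  have h : {ω | τ ω ≤ c} ∩ {ω | τ ω ≤ s} = {ω | τ ω ≤ min c s} := by
    ext ω; simp
  rw [h]
  exact hG inf_le_right _ (hτ _)

theorem measurableSet_pastSigma_inter_lt (hG : Monotone G)
    (hτ : ∀ s, MeasurableSet[G s] {ω | τ ω ≤ s}) {c : ι} {F : Set Ω}
    (hF : MeasurableSet[G c] F) :
    MeasurableSet[pastSigma G univ τ] (F ∩ {ω | c < τ ω}) := by
  refine measurableSet_pastSigma_of_forall fun s => ?_
  rcases le_or_gt s c with hsc | hcs
  · have h : F ∩ {ω | c < τ ω} ∩ {ω | τ ω ≤ s} = ∅ := by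
      ext ω
      simp only [mem_inter_iff, mem_empty_iff_false, iff_false, not_and]
      exact fun h hs => (hsc.trans_lt h.2).not_ge hs
    rw [h]
    exact @MeasurableSet.empty _ (G s)
  · have h : F ∩ {ω | c < τ ω} ∩ {ω | τ ω ≤ s} = F ∩ {ω | τ ω ≤ c}ᶜ ∩ {ω | τ ω ≤ s} := by
      ext ω; simp
    rw [h]
    exact ((hG hcs.le _ hF).inter ((hG hcs.le _ (hτ c)).compl)).inter (hτ s)

variable [TopologicalSpace ι] [OrderTopology ι] [SecondCountableTopology ι]
  [MeasurableSpace ι] [BorelSpace ι]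

theorem measurable_pastSigma_self (hG : Monotone G)
    (hτ : ∀ s, MeasurableSet[G s] {ω | τ ω ≤ s}) :
    Measurable[pastSigma G univ τ] τ :=
  let := pastSigma G univ τ
  measurable_of_Iic (measurableSet_pastSigma_le hG hτ)

theorem measurable_stoppingTime_min_const (hG : Monotone G)
    (hτ : ∀ s, MeasurableSet[G s] {ω | τ ω ≤ s}) (s : ι) :
    Measurable[G s] fun ω => min (τ ω) s := by
  let := G s
  refine measurable_of_Iic fun u => ?_
  rcases le_or_gt s u with hsu | hus
  · have h : (fun ω => min (τ ω) s) ⁻¹' Iic u = univ :=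
      eq_univ_of_forall fun ω => (min_le_right _ _).trans hsu
    rw [h]
    exact .univ
  · have h : (fun ω => min (τ ω) s) ⁻¹' Iic u = {ω | τ ω ≤ u} := by
      ext ω
      simp [hus.not_ge]
    rw [h]
    exact hG hus.le _ (hτ u)

variable {E : Type*} [MeasurableSpace E] {S : ι → Ω → E}

theorem ProgMeasurableOn.measurable_stoppedValue_min_const (hS : ProgMeasurableOn G S)
    (hG : Monotone G) (hτ : ∀ s, MeasurableSet[G s] {ω | τ ω ≤ s}) (s : ι) :
    Measurable[G s] fun ω => S (min (τ ω) s) ω :=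
  let := G s
  (hS s).comp <| (measurable_stoppingTime_min_const hG hτ s).subtype_mk
    (h := fun _ => min_le_right _ _) |>.prodMk measurable_id

theorem ProgMeasurableOn.measurable_pastSigma_stoppedValue (hS : ProgMeasurableOn G S)
    (hG : Monotone G) (hτ : ∀ s, MeasurableSet[G s] {ω | τ ω ≤ s}) :
    Measurable[pastSigma G univ τ] fun ω => S (τ ω) ω := by
  intro B hB
  refine measurableSet_pastSigma_of_forall fun s => ?_
  have h : (fun ω => S (τ ω) ω) ⁻¹' B ∩ {ω | τ ω ≤ s}
      = (fun ω => S (min (τ ω) s) ω) ⁻¹' B ∩ {ω | τ ω ≤ s} := by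
    ext ω
    simp only [mem_inter_iff, mem_preimage]
    exact and_congr_left fun hs => by rw [min_eq_left hs]
  rw [h]
  exact (hS.measurable_stoppedValue_min_const hG hτ s hB).inter (hτ s)

theorem ProgMeasurableOn.measurable_prod_min_const (hS : ProgMeasurableOn G S) (c : ι) :
    Measurable[MeasurableSpace.prod inferInstance (G c)] fun p : ι × Ω => S (min p.1 c) p.2 :=
  let := G c
  (hS c).comp <| (measurable_fst.min measurable_const).subtype_mk
    (h := fun _ => min_le_right _ _) |>.prodMk measurable_snd

end LinearOrder

theorem MeasurableSet.inter_univ_prod_of_inter {α Ω : Type*} [mα : MeasurableSpace α]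
    {m₁ m₂ : MeasurableSpace Ω} {T : Set Ω} (hT : MeasurableSet[m₂] T)
    (h : ∀ F, MeasurableSet[m₁] F → MeasurableSet[m₂] (F ∩ T)) {E : Set (α × Ω)}
    (hE : MeasurableSet[mα.prod m₁] E) :
    MeasurableSet[mα.prod m₂] (E ∩ univ ×ˢ T) := by
  let := m₂
  have hval : Measurable[_, mα.prod m₁] (Subtype.val : ↥(univ ×ˢ T) → α × Ω) := by
    refine @Measurable.prodMk _ _ _ _ mα m₁ _ _ (measurable_fst.comp measurable_subtype_coe) ?_
    intro F hF
    convert measurable_subtype_coe (MeasurableSet.univ.prod (h F hF)) using 1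
    ext ⟨⟨a, ω⟩, ha⟩
    simp [(mem_prod.mp ha).2]
  simpa [Subtype.image_preimage_coe, inter_comm] using
    (MeasurableSet.univ.prod hT).subtype_image (hval hE)

section NNReal

variable {Ω E : Type*} [MeasurableSpace E] {G : ℝ≥0 → MeasurableSpace Ω} {S : ℝ≥0 → Ω → E}
  {τ : Ω → ℝ≥0}

theorem ProgMeasurableOn.measurable_prod_min_stoppingTime (hS : ProgMeasurableOn G S)
    (hG : Monotone G) (hτ : ∀ s, MeasurableSet[G s] {ω | τ ω ≤ s}) :
    Measurable[MeasurableSpace.prod inferInstance (pastSigma G univ τ)]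
      fun p : ℝ≥0 × Ω => S (min p.1 (τ p.2)) p.2 := by
  let := pastSigma G univ τ
  intro B hB
  have hcover : (fun p : ℝ≥0 × Ω => S (min p.1 (τ p.2)) p.2) ⁻¹' B =
      {p | τ p.2 ≤ p.1} ∩ univ ×ˢ ((fun ω => S (τ ω) ω) ⁻¹' B) ∪
      ⋃ q : ℚ, ({p : ℝ≥0 × Ω | p.1 ≤ (q : ℝ).toNNReal} ∩
          (fun p : ℝ≥0 × Ω => S (min p.1 (q : ℝ).toNNReal) p.2) ⁻¹' B) ∩
        univ ×ˢ {ω | (q : ℝ).toNNReal < τ ω} := by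
    ext ⟨v, ω⟩
    simp only [mem_preimage, mem_union, mem_iUnion, mem_inter_iff, mem_prod, mem_univ, true_and]
    constructor
    · intro hvB
      rcases le_or_gt (τ ω) v with hτv | hvτ
      · exact Or.inl ⟨hτv, by rwa [min_eq_right hτv] at hvB⟩
      · obtain ⟨q, -, hvq, hqτ⟩ := (NNReal.lt_iff_exists_rat_btwn _ _).mp hvτ
        refine Or.inr ⟨q, ⟨hvq.le, ?_⟩, hqτ⟩
        rw [min_eq_left hvτ.le] at hvB
        rwa [min_eq_left hvq.le]
    · rintro (⟨hτv, hB'⟩ | ⟨q, ⟨hvq, hB'⟩, hqτ⟩)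
      · rwa [min_eq_right hτv]
      · rw [min_eq_left hvq] at hB'
        rwa [min_eq_left (hvq.trans hqτ.le)]
  rw [hcover]
  refine .union ?_ (.iUnion fun q => ?_)
  · exact (measurableSet_le ((measurable_pastSigma_self hG hτ).comp measurable_snd)
      measurable_fst).inter
      (MeasurableSet.univ.prod (hS.measurable_pastSigma_stoppedValue hG hτ hB))
  · have hT : MeasurableSet {ω | (q : ℝ).toNNReal < τ ω} := by
      simpa only [compl_ofPred, not_le] using (measurableSet_pastSigma_le hG hτ _).compl
    refine hT.inter_univ_prod_of_inter (m₁ := G (q : ℝ).toNNReal)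
      (fun F hF => measurableSet_pastSigma_inter_lt hG hτ hF) ?_
    let := G (q : ℝ).toNNReal
    exact (measurable_fst measurableSet_Iic).inter (hS.measurable_prod_min_const _ hB)

theorem ProgMeasurableOn.measurable_comp_of_le_stoppingTime {X : Type*} [MeasurableSpace X]
    (hS : ProgMeasurableOn G S) (hG : Monotone G) (hτ : ∀ s, MeasurableSet[G s] {ω | τ ω ≤ s})
    {M : MeasurableSpace Ω} (hM : pastSigma G univ τ ≤ M) {σ : X × Ω → ℝ≥0}
    (hσ : Measurable[MeasurableSpace.prod inferInstance M] σ) (hστ : ∀ p, σ p ≤ τ p.2) :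
    Measurable[MeasurableSpace.prod inferInstance M] fun p : X × Ω => S (σ p) p.2 := by
  let := M
  have hpair : Measurable[_, MeasurableSpace.prod inferInstance (pastSigma G univ τ)]
      fun p : X × Ω => (σ p, p.2) :=
    hσ.prodMk (measurable_snd.mono le_rfl hM)
  have hcomp : (fun p : X × Ω => S (σ p) p.2) =
      (fun q : ℝ≥0 × Ω => S (min q.1 (τ q.2)) q.2) ∘ fun p => (σ p, p.2) := by
    funext p
    simp [min_eq_left (hστ p)]
  rw [hcomp]
  exact (hS.measurable_prod_min_stoppingTime hG hτ).comp hpair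

end NNReal

theorem delayedProcess_progMeasurable_general
    {Ω I : Type*}
    (G : ℝ≥0 → MeasurableSpace Ω) (hGmono : Monotone G)
    (S : I → ℝ≥0 → Ω → ℝ)
    (hSprog : ∀ a, ProgMeasurableOn G (S a))
    (T : ℝ≥0)
    (π : I → ℝ≥0 → Ω → ℝ≥0)
    (hπstop : ∀ a, ∀ t ≤ T, ∀ u : ℝ≥0, MeasurableSet[G u] {ω | π a t ω ≤ u})
    (hπmono : ∀ a, ∀ t u : ℝ≥0, t ≤ u → u ≤ T → ∀ ω, π a t ω ≤ π a u ω)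
    (hπprog : ∀ a, ∀ t ≤ T,
      Measurable[MeasurableSpace.prod Subtype.instMeasurableSpace
          (⨆ b, pastSigma G Set.univ (π b t))]
        (fun p : Set.Iic t × Ω => π a (↑p.1) p.2)) :
    ∀ a, ∀ t ≤ T,
      Measurable[MeasurableSpace.prod Subtype.instMeasurableSpace
          (⨆ b, pastSigma G Set.univ (π b t))]
        (fun p : Set.Iic t × Ω => S a (π a (↑p.1) p.2) p.2) := by
  intro a t ht
  exact (hSprog a).measurable_comp_of_le_stoppingTime hGmono (hπstop a t ht)
    (le_iSup (fun b => pastSigma G univ (π b t)) a) (hπprog a t ht)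
    fun p => hπmono a p.1 t p.1.2 ht p.2

/-- Inheritance of progressive measurability under execution delays:
if each `S^a` is `𝔾`-progressively measurable and each execution delay `π^a` is
progressively measurable w.r.t. the delayed filtration `𝔾^π` (with
`𝓖^π_t = σ(⋃_b 𝓖_{π^b(t)})`), then each delayed process
`(t,ω) ↦ S^a(π^a(t,ω),ω)` is progressively measurable w.r.t. `𝔾^π`. -/
theorem delayedProcess_progMeasurable
    {Ω I : Type*} [m𝒢 : MeasurableSpace Ω] (P : Measure Ω) [IsProbabilityMeasure P]
    (G : ℝ≥0 → MeasurableSpace Ω) (hGmono : Monotone G) (hGle : ∀ u, G u ≤ m𝒢)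
    (S : I → ℝ≥0 → Ω → ℝ)
    (hSprog : ∀ a, ProgMeasurableOn G (S a))
    (T : ℝ≥0) (hT : 0 < T)
    (π : I → ℝ≥0 → Ω → ℝ≥0)
    (hπstop : ∀ a, ∀ t ≤ T, ∀ u : ℝ≥0, MeasurableSet[G u] {ω | π a t ω ≤ u})
    (hπge : ∀ a, ∀ t ≤ T, ∀ ω, t ≤ π a t ω)
    (hπmono : ∀ a, ∀ t u : ℝ≥0, t ≤ u → u ≤ T → ∀ ω, π a t ω ≤ π a u ω)
    (hπprog : ∀ a, ∀ t ≤ T,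
      Measurable[MeasurableSpace.prod Subtype.instMeasurableSpace
          (⨆ b, pastSigma G Set.univ (π b t))]
        (fun p : Set.Iic t × Ω => π a (↑p.1) p.2)) :
    ∀ a, ∀ t ≤ T,
      Measurable[MeasurableSpace.prod Subtype.instMeasurableSpace
          (⨆ b, pastSigma G Set.univ (π b t))]
        (fun p : Set.Iic t × Ω => S a (π a (↑p.1) p.2) p.2) :=
  delayedProcess_progMeasurable_general G hGmono S hSprog T π hπstop hπmono hπprog
end
end
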